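/- Let k be an algebraically closed field and X a del Pezzo surface of degree 1 given as a smooth sextic V(f) in P_k(1,1,2,3). If Γ = V(z - Q(x,y), w - C(x,y)), with Q, C binary forms of degrees 2, 3, is a divisor on X, then (Γ, -K_X)_X = 1, i.e., Γ meets the anticanonical divisor V(x) in a scheme of degree 1. -/

import Mathlib

/-!
Modulo `x`, `z - Q(x, y)` and `w - C(x, y)`, the variables reduce to `x ≡ 0`, `y ≡ y`,
`z ≡ Q(0,1) y²`, `w ≡ C(0,1) y³`, so a weighted-homogeneous `p` of degree `d` is congruent to
`p(P) y^d` with `P = (0, 1, Q(0,1), C(0,1))`. Since the ideal vanishes at `P` while `y^d` does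
not, each graded piece of the quotient is the line spanned by `y^d`: the coordinate ring of
`Γ ∩ V(x)` is `k[y]`.
-/

open MvPolynomial

noncomputable section

/-- The dimension of the degree-`d` graded piece (for the weights `1,1,2,3` on `x,y,z,w`)
of the quotient of `k[x,y,z,w]` by the homogeneous ideal `I`; for `d` large this is the
degree of the closed subscheme of `P_k(1,1,2,3)` cut out by `I`. -/
def pieceRank (k : Type*) [Field k] (I : Ideal (MvPolynomial (Fin 4) k)) (d : ℕ) : ℕ :=
  Module.finrank k
    (↥(weightedHomogeneousSubmodule k ![1, 1, 2, 3] d) ⧸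
      (Submodule.comap (weightedHomogeneousSubmodule k ![1, 1, 2, 3] d).subtype
        (I.restrictScalars k)))

theorem MvPolynomial.IsWeightedHomogeneous.aeval_algebraMap_mul_pow {R S σ : Type*}
    [CommSemiring R] [CommSemiring S] [Algebra R S] {w : σ → ℕ} {d : ℕ}
    {p : MvPolynomial σ R} (hp : p.IsWeightedHomogeneous w d) (a : σ → R) (y : S) :
    aeval (fun i => algebraMap R S (a i) * y ^ w i) p = algebraMap R S (eval a p) * y ^ d := by
  conv_lhs => rw [p.as_sum]
  conv_rhs => rw [p.as_sum]
  simp only [map_sum, Finset.sum_mul]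
  refine Finset.sum_congr rfl fun m hm => ?_
  have hweight : ∑ i ∈ m.support, w i * m i = d := by
    simpa [Finsupp.weight_apply, Finsupp.sum, mul_comm] using hp (mem_support_iff.mp hm)
  simp only [aeval_monomial, eval_monomial, Finsupp.prod, mul_pow, Finset.prod_mul_distrib,
    ← pow_mul, Finset.prod_pow_eq_pow_sum, hweight, map_mul, map_prod, map_pow, mul_assoc]

theorem Submodule.finrank_quotient_comap_subtype_eq_one {K M : Type*} [Field K]
    [AddCommGroup M] [Module K M] {V N : Submodule K M} {v : M} (hv : v ∈ V) (hvN : v ∉ N)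
    (hspan : ∀ x ∈ V, ∃ c : K, x - c • v ∈ N) :
    Module.finrank K (V ⧸ N.comap V.subtype) = 1 := by
  refine finrank_eq_one (Submodule.Quotient.mk ⟨v, hv⟩)
    (by rwa [Ne, Submodule.Quotient.mk_eq_zero]) fun q => ?_
  obtain ⟨⟨x, hx⟩, rfl⟩ := Submodule.Quotient.mk_surjective _ q
  obtain ⟨c, hc⟩ := hspan x hx
  refine ⟨c, ?_⟩
  rw [← Submodule.Quotient.mk_smul, Submodule.Quotient.eq, Submodule.mem_comap]
  simpa using N.neg_mem hc

section GammaMeetsX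

variable {k : Type*} [Field k]

/-- The point `[0 : 1 : Q(0,1) : C(0,1)]`, where `Γ` meets `V(x)`. -/
def gammaMeetsXPoint (Q C : MvPolynomial (Fin 2) k) : Fin 4 → k :=
  ![0, 1, eval ![0, 1] Q, eval ![0, 1] C]

theorem mk_rename_of_isHomogeneous {I : Ideal (MvPolynomial (Fin 4) k)} (hx : X 0 ∈ I)
    {n : ℕ} {g : MvPolynomial (Fin 2) k} (hg : g.IsHomogeneous n) :
    Ideal.Quotient.mk I (rename ![0, 1] g) =
      algebraMap k _ (eval ![0, 1] g) * Ideal.Quotient.mk I (X 1) ^ n := by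
  have hsubst : (Ideal.Quotient.mkₐ k I).comp (rename ![0, 1]) = aeval fun i =>
      algebraMap k _ (![0, 1] i) * Ideal.Quotient.mk I (X 1) ^ (1 : Fin 2 → ℕ) i := by
    ext i
    fin_cases i <;> simp [Ideal.Quotient.eq_zero_iff_mem.mpr hx]
  calc Ideal.Quotient.mk I (rename ![0, 1] g)
      = (Ideal.Quotient.mkₐ k I).comp (rename ![0, 1]) g := rfl
    _ = _ := by
      rw [hsubst]
      exact hg.aeval_algebraMap_mul_pow _ _

theorem sub_C_mul_X_pow_mem_of_isWeightedHomogeneous {Q C : MvPolynomial (Fin 2) k}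
    (hQ : Q.IsHomogeneous 2) (hC : C.IsHomogeneous 3) {I : Ideal (MvPolynomial (Fin 4) k)}
    (hz : X 2 - rename ![0, 1] Q ∈ I) (hw : X 3 - rename ![0, 1] C ∈ I) (hx : X 0 ∈ I)
    {d : ℕ} {p : MvPolynomial (Fin 4) k} (hp : p.IsWeightedHomogeneous ![1, 1, 2, 3] d) :
    p - MvPolynomial.C (eval (gammaMeetsXPoint Q C) p) * X 1 ^ d ∈ I := by
  rw [← Ideal.Quotient.eq]
  have hsubst : Ideal.Quotient.mkₐ k I = aeval fun i =>
      algebraMap k _ (gammaMeetsXPoint Q C i) * Ideal.Quotient.mk I (X 1) ^ ![1, 1, 2, 3] i := by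
    ext i
    fin_cases i
    · simp [gammaMeetsXPoint, Ideal.Quotient.eq_zero_iff_mem.mpr hx]
    · simp [gammaMeetsXPoint]
    · simpa [gammaMeetsXPoint, Ideal.Quotient.eq.mpr hz] using mk_rename_of_isHomogeneous hx hQ
    · simpa [gammaMeetsXPoint, Ideal.Quotient.eq.mpr hw] using mk_rename_of_isHomogeneous hx hC
  calc Ideal.Quotient.mk I p = Ideal.Quotient.mkₐ k I p := rfl
    _ = algebraMap k _ (eval (gammaMeetsXPoint Q C) p) * Ideal.Quotient.mk I (X 1) ^ d := by
      rw [hsubst]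
      exact hp.aeval_algebraMap_mul_pow _ _
    _ = Ideal.Quotient.mk I (MvPolynomial.C (eval (gammaMeetsXPoint Q C) p) * X 1 ^ d) := by
      rw [map_mul, map_pow, ← MvPolynomial.algebraMap_eq, Ideal.Quotient.mk_algebraMap]

theorem X_one_pow_notMem_span (Q C : MvPolynomial (Fin 2) k) (d : ℕ) :
    (X 1 : MvPolynomial (Fin 4) k) ^ d ∉
      Ideal.span {X 2 - rename ![0, 1] Q, X 3 - rename ![0, 1] C, X 0} := by
  have hvanish : Ideal.span {X 2 - rename ![0, 1] Q, X 3 - rename ![0, 1] C, X 0} ≤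
      RingHom.ker (eval (gammaMeetsXPoint Q C)) := by
    have hrestrict (a b : k) : ![0, 1, a, b] ∘ ![0, 1] = ![0, 1] := by
      ext i
      fin_cases i <;> rfl
    rw [Ideal.span_le]
    rintro g (rfl | rfl | rfl) <;> simp [eval_rename, hrestrict, gammaMeetsXPoint]
  intro h
  simpa [gammaMeetsXPoint] using hvanish h

end GammaMeetsX

theorem stmt_2_general (k : Type*) [Field k]
    (Q C : MvPolynomial (Fin 2) k)
    (hQ : Q.IsHomogeneous 2) (hC : C.IsHomogeneous 3) :
    ∀ d : ℕ, 1 ≤ d →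
      pieceRank k
        (Ideal.span {X 2 - rename ![0, 1] Q, X 3 - rename ![0, 1] C, X 0}) d = 1 := by
  intro d _
  have hy : (X 1 : MvPolynomial (Fin 4) k) ^ d ∈
      weightedHomogeneousSubmodule k ![1, 1, 2, 3] d := by
    have h := (isWeightedHomogeneous_X k ![1, 1, 2, 3] 1).pow d
    simp only [Matrix.cons_val_one, Matrix.cons_val_zero, smul_eq_mul, mul_one] at h
    exact h
  refine Submodule.finrank_quotient_comap_subtype_eq_one hy (X_one_pow_notMem_span Q C d)
    fun p hp => ⟨eval (gammaMeetsXPoint Q C) p, ?_⟩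
  rw [smul_eq_C_mul]
  exact sub_C_mul_X_pow_mem_of_isWeightedHomogeneous hQ hC (Ideal.subset_span (by simp))
    (Ideal.subset_span (by simp)) (Ideal.subset_span (by simp)) hp

/-- Let `k` be algebraically closed and `X = V(f)` a smooth sextic in
`P_k(1,1,2,3)` (a del Pezzo surface of degree 1). If `Γ = V(z - Q, w - C)` (with `Q, C`
binary forms of degrees 2, 3) is a divisor on `X`, then `(Γ, -K_X)_X = 1`: `Γ` meets the
anticanonical divisor `V(x)` in a scheme of degree 1, i.e. the scheme with ideal
`(z - Q, w - C, x)` has degree 1. -/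
theorem stmt_2 (k : Type*) [Field k] [IsAlgClosed k]
    (f : MvPolynomial (Fin 4) k)
    (hf : MvPolynomial.IsWeightedHomogeneous ![1, 1, 2, 3] f 6)
    (hsmooth : ∀ P : Fin 4 → k,
        eval P f = 0 → (∀ i : Fin 4, eval P (pderiv i f) = 0) → P = 0)
    (Q C : MvPolynomial (Fin 2) k)
    (hQ : Q.IsHomogeneous 2) (hC : C.IsHomogeneous 3)
    (hΓ : aeval ![(X 0 : MvPolynomial (Fin 2) k), X 1, Q, C] f = 0) :
    ∀ d : ℕ, 1 ≤ d →
      pieceRank k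
        (Ideal.span {X 2 - rename ![0, 1] Q, X 3 - rename ![0, 1] C, X 0}) d = 1 :=
  stmt_2_general k Q C hQ hC

end
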